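/- arXiv:2007.14434 — 5 statements merged into one kernel-verified Lean document; each statement's English description precedes it below -/
import Mathlib

section
/- The rate function of a sum of i.i.d. geometric variables: for f̄ > 0, 0 < ϱ < 1, and 0 < x < f̄·ϱ/(1-ϱ), sup_{θ ≥ 0} { -θx - f̄·log((1-ϱ)/(1-ϱ e^{-θ})) } = x·log(x/(ϱ(f̄+x))) + f̄·log(f̄/((1-ϱ)(f̄+x))). -/
/-!
Substituting `u = ϱ e^{-θ}`, which runs over `(0, ϱ]` as `θ` runs over `[0, ∞)`, the objective
becomes `x log u + f̄ log (1 - u)` up to the constant `x log ϱ + f̄ log (1 - ϱ)`. By Gibbs'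
inequality this is maximal at `u = x / (f̄ + x)`, which lies in `(0, ϱ]` exactly because
`x < f̄ ϱ / (1 - ϱ)`; the maximiser is `θ = log (ϱ (f̄ + x) / x)`.
-/

open Real

namespace Real

lemma mul_log_add_mul_log_one_sub_le {a b u : ℝ} (ha : 0 < a) (hb : 0 < b) (hu0 : 0 < u)
    (hu1 : u < 1) :
    a * log u + b * log (1 - u) ≤ a * log (a / (a + b)) + b * log (b / (a + b)) := by
  have hab : 0 < a + b := by linarith
  have h1u : 0 < 1 - u := by linarith
  have hu_le : log u - log (a / (a + b)) ≤ u / (a / (a + b)) - 1 := by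
    rw [← log_div hu0.ne' (by positivity)]
    exact log_le_sub_one_of_pos (by positivity)
  have h1u_le : log (1 - u) - log (b / (a + b)) ≤ (1 - u) / (b / (a + b)) - 1 := by
    rw [← log_div h1u.ne' (by positivity)]
    exact log_le_sub_one_of_pos (by positivity)
  have hsum : a * (u / (a / (a + b)) - 1) + b * ((1 - u) / (b / (a + b)) - 1) = 0 := by
    field_simp
    ring
  nlinarith [mul_le_mul_of_nonneg_left hu_le ha.le, mul_le_mul_of_nonneg_left h1u_le hb.le]

end Real

section GeometricRateFunction

variable {f ϱ x : ℝ}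

lemma neg_mul_sub_mul_log_geometric_eq (θ : ℝ) (hϱ : 0 < ϱ) (h1ϱ : 1 - ϱ ≠ 0)
    (hu : 1 - ϱ * exp (-θ) ≠ 0) :
    -θ * x - f * log ((1 - ϱ) / (1 - ϱ * exp (-θ))) =
      x * log (ϱ * exp (-θ)) + f * log (1 - ϱ * exp (-θ)) - (x * log ϱ + f * log (1 - ϱ)) := by
  rw [log_div h1ϱ hu, log_mul hϱ.ne' (exp_pos _).ne', log_exp]
  ring

lemma geometric_rate_eq (hf : 0 < f) (hϱ : 0 < ϱ) (h1ϱ : 0 < 1 - ϱ) (hx : 0 < x) :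
    x * log (x / (ϱ * (f + x))) + f * log (f / ((1 - ϱ) * (f + x))) =
      x * log (x / (x + f)) + f * log (f / (x + f)) - (x * log ϱ + f * log (1 - ϱ)) := by
  have hfx : 0 < f + x := by linarith
  rw [add_comm x f, div_mul_eq_div_div_swap, div_mul_eq_div_div_swap,
    log_div (by positivity) hϱ.ne', log_div (by positivity) h1ϱ.ne']
  ring

end GeometricRateFunction

/-- The rate function of a sum of i.i.d. geometric variables: for `f̄ > 0`,
`0 < ϱ < 1` and `0 < x < f̄ ϱ/(1-ϱ)`,
`sup_{θ ≥ 0} { -θx - f̄ log((1-ϱ)/(1-ϱ e^{-θ})) }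
  = x log(x/(ϱ(f̄+x))) + f̄ log(f̄/((1-ϱ)(f̄+x)))`. -/
theorem stmt_4 (fbar ϱ x : ℝ) (hf : 0 < fbar) (hϱ : ϱ ∈ Set.Ioo (0 : ℝ) 1)
    (hx0 : 0 < x) (hx1 : x < fbar * ϱ / (1 - ϱ)) :
    sSup ((fun θ : ℝ =>
        -θ * x - fbar * Real.log ((1 - ϱ) / (1 - ϱ * Real.exp (-θ)))) '' Set.Ici 0) =
      x * Real.log (x / (ϱ * (fbar + x))) +
        fbar * Real.log (fbar / ((1 - ϱ) * (fbar + x))) := by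
  obtain ⟨hϱ0, hϱ1⟩ := hϱ
  have h1ϱ : 0 < 1 - ϱ := by linarith
  have hxϱ : x < ϱ * (fbar + x) := by nlinarith [(lt_div_iff₀ h1ϱ).mp hx1]
  rw [geometric_rate_eq hf hϱ0 h1ϱ hx0]
  refine IsGreatest.csSup_eq ⟨⟨log (ϱ * (fbar + x) / x), ?_, ?_⟩, ?_⟩
  · exact (log_pos ((one_lt_div hx0).mpr hxϱ)).le
  · have hu : ϱ * exp (-log (ϱ * (fbar + x) / x)) = x / (x + fbar) := by
      rw [exp_neg, exp_log (by positivity)]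
      field_simp
      ring
    have h1u : 1 - x / (x + fbar) = fbar / (x + fbar) := by
      field_simp
      ring
    dsimp only
    rw [neg_mul_sub_mul_log_geometric_eq _ hϱ0 h1ϱ.ne' (by rw [hu, h1u]; positivity), hu, h1u]
  · rintro _ ⟨θ, hθ, rfl⟩
    have hexp : exp (-θ) ≤ 1 := exp_le_one_iff.mpr (neg_nonpos.mpr hθ)
    have hu1 : ϱ * exp (-θ) < 1 := by nlinarith [exp_pos (-θ)]
    dsimp only
    rw [neg_mul_sub_mul_log_geometric_eq θ hϱ0 h1ϱ.ne' (by linarith)]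
    linarith [mul_log_add_mul_log_one_sub_le hx0 hf (by positivity) hu1]
end

section
/- Ratio-of-falling-factorials limit: let (n)_k = n(n-1)⋯(n-k+1). If k(m), i(m) are sequences of natural numbers with k(m) = o(n(m)), i(m) = o(n(m)), and k(m)·i(m)/n(m) → x as n(m) → ∞, then (n(m)+k(m)+i(m))_{k(m)} / (n(m)+k(m))_{k(m)} → e^x. -/
/-!
Writing `(n + k + i)_k / (n + k)_k` as `∏_{j<k} (1 + i / (n + 1 + j))`, the ratio is squeezed
between `(1 + i/(n+k))^k` and `(1 + i/(n+1))^k`. Both bounds have the form `(1 + c)^k` with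
`c → 0` and `k c → x`, and such powers tend to `e^x` because
`c / (1 + c) ≤ log (1 + c) ≤ c`.
-/

open Filter Finset Topology

section Limits

variable {α : Type*} {l : Filter α}

theorem tendsto_one_add_pow_exp_of_tendsto_mul {k : α → ℕ} {c : α → ℝ} {x : ℝ}
    (hc : Tendsto c l (𝓝 0)) (hkc : Tendsto (fun m => k m * c m) l (𝓝 x)) :
    Tendsto (fun m => (1 + c m) ^ k m) l (𝓝 (Real.exp x)) := by
  have hpos : ∀ᶠ m in l, 0 < 1 + c m := by
    filter_upwards [hc.eventually_const_lt (show (-1 : ℝ) < 0 by norm_num)] with m hm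
    linarith
  have hlower : Tendsto (fun m => k m * c m / (1 + c m)) l (𝓝 x) := by
    simpa [Pi.div_def] using hkc.div (hc.const_add 1) (by norm_num : (1 : ℝ) + 0 ≠ 0)
  have hlog : Tendsto (fun m => k m * Real.log (1 + c m)) l (𝓝 x) := by
    refine tendsto_of_tendsto_of_tendsto_of_le_of_le' hlower hkc ?_ ?_
    · filter_upwards [hpos] with m hm
      rw [mul_div_assoc]
      gcongr
      calc c m / (1 + c m) = 1 - (1 + c m)⁻¹ := by field_simp; ring
        _ ≤ _ := Real.one_sub_inv_le_log_of_pos hm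
    · filter_upwards [hpos] with m hm
      gcongr
      linarith [Real.log_le_sub_one_of_pos hm]
  refine ((Real.continuous_exp.tendsto x).comp hlog).congr' ?_
  filter_upwards [hpos] with m hm
  simp [← Real.log_pow, Real.exp_log (pow_pos hm _)]

theorem tendsto_div_add_of_tendsto_div {a b : α → ℝ} (hb : ∀ᶠ m in l, b m ≠ 0)
    (h : Tendsto (fun m => a m / b m) l (𝓝 0)) :
    Tendsto (fun m => b m / (b m + a m)) l (𝓝 1) := by
  have h' : Tendsto (fun m => (1 + a m / b m)⁻¹) l (𝓝 1) := by
    simpa using (h.const_add 1).inv₀ (by norm_num)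
  refine h'.congr' ?_
  filter_upwards [hb] with m hm
  rw [one_add_div hm, inv_div]

theorem tendsto_div_of_tendsto_div_of_tendsto_div_one {a b d : α → ℝ} {L : ℝ}
    (hb : ∀ᶠ m in l, b m ≠ 0) (ha : Tendsto (fun m => a m / b m) l (𝓝 L))
    (hbd : Tendsto (fun m => b m / d m) l (𝓝 1)) :
    Tendsto (fun m => a m / d m) l (𝓝 L) := by
  have h : Tendsto (fun m => a m / b m * (b m / d m)) l (𝓝 L) := by simpa using ha.mul hbd
  refine h.congr' ?_
  filter_upwards [hb] with m hm
  exact div_mul_div_cancel₀ hm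

end Limits

theorem descFactorial_add_div_descFactorial (n k i : ℕ) :
    ((n + k + i).descFactorial k : ℝ) / (n + k).descFactorial k =
      ∏ j ∈ range k, (1 + (i : ℝ) / (n + 1 + j)) := by
  rw [show n + k + i = n + i + k by omega, Nat.add_descFactorial_eq_ascFactorial,
    Nat.add_descFactorial_eq_ascFactorial, Nat.ascFactorial_eq_prod_range,
    Nat.ascFactorial_eq_prod_range, Nat.cast_prod, Nat.cast_prod, ← prod_div_distrib]
  refine prod_congr rfl fun j _ => ?_
  have : (n : ℝ) + 1 + j ≠ 0 := by positivity
  push_cast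
  field_simp
  ring

theorem one_add_div_pow_le_descFactorial_add_div (n k i : ℕ) :
    (1 + (i : ℝ) / (n + k)) ^ k ≤
      ((n + k + i).descFactorial k : ℝ) / (n + k).descFactorial k := by
  rw [descFactorial_add_div_descFactorial, pow_eq_prod_const]
  refine prod_le_prod (fun j _ => by positivity) fun j hj => ?_
  have : (j : ℝ) + 1 ≤ k := by exact_mod_cast mem_range.mp hj
  gcongr 1 + _ / ?_
  linarith

theorem descFactorial_add_div_le_one_add_div_pow (n k i : ℕ) :
    ((n + k + i).descFactorial k : ℝ) / (n + k).descFactorial k ≤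
      (1 + (i : ℝ) / (n + 1)) ^ k := by
  rw [descFactorial_add_div_descFactorial, pow_eq_prod_const]
  refine prod_le_prod (fun j _ => by positivity) fun j _ => ?_
  gcongr 1 + _ / ?_
  linarith [(j.cast_nonneg : (0 : ℝ) ≤ j)]

theorem stmt_8_general (n k i : ℕ → ℕ) (x : ℝ)
    (hn : Tendsto n atTop atTop)
    (hk : Tendsto (fun m => (k m : ℝ) / n m) atTop (nhds 0))
    (hi : Tendsto (fun m => (i m : ℝ) / n m) atTop (nhds 0))
    (hki : Tendsto (fun m => (k m : ℝ) * i m / n m) atTop (nhds x)) :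
    Tendsto (fun m =>
        ((Nat.descFactorial (n m + k m + i m) (k m) : ℝ)) /
          (Nat.descFactorial (n m + k m) (k m) : ℝ))
      atTop (nhds (Real.exp x)) := by
  have hnR : Tendsto (fun m => (n m : ℝ)) atTop atTop := tendsto_natCast_atTop_atTop.comp hn
  have hn0 : ∀ᶠ m in atTop, (n m : ℝ) ≠ 0 := hnR.eventually_ne_atTop 0
  have hinv : Tendsto (fun m => (1 : ℝ) / n m) atTop (𝓝 0) := by
    simpa [Pi.inv_def] using hnR.inv_tendsto_atTop
  have one_add_div_pow_tendsto {d : ℕ → ℝ}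
      (hd : Tendsto (fun m => (n m : ℝ) / d m) atTop (𝓝 1)) :
      Tendsto (fun m => (1 + (i m : ℝ) / d m) ^ k m) atTop (𝓝 (Real.exp x)) := by
    refine tendsto_one_add_pow_exp_of_tendsto_mul
      (tendsto_div_of_tendsto_div_of_tendsto_div_one hn0 hi hd) ?_
    simpa only [mul_div_assoc] using tendsto_div_of_tendsto_div_of_tendsto_div_one hn0 hki hd
  exact tendsto_of_tendsto_of_tendsto_of_le_of_le
    (one_add_div_pow_tendsto (tendsto_div_add_of_tendsto_div hn0 hk))
    (one_add_div_pow_tendsto (tendsto_div_add_of_tendsto_div hn0 hinv))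
    (fun m => one_add_div_pow_le_descFactorial_add_div (n m) (k m) (i m))
    (fun m => descFactorial_add_div_le_one_add_div_pow (n m) (k m) (i m))

/-- Ratio-of-falling-factorials limit: if `n(m) → ∞`, `k(m)/n(m) → 0`,
`i(m)/n(m) → 0` and `k(m) i(m)/n(m) → x ≥ 0`, then
`(n+k+i)_k / (n+k)_k → e^x`, where `(n)_k` is the falling factorial. -/
theorem stmt_8 (n k i : ℕ → ℕ) (x : ℝ) (hx : 0 ≤ x)
    (hn : Tendsto n atTop atTop)
    (hk : Tendsto (fun m => (k m : ℝ) / n m) atTop (nhds 0))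
    (hi : Tendsto (fun m => (i m : ℝ) / n m) atTop (nhds 0))
    (hki : Tendsto (fun m => (k m : ℝ) * i m / n m) atTop (nhds x)) :
    Tendsto (fun m =>
        ((Nat.descFactorial (n m + k m + i m) (k m) : ℝ)) /
          (Nat.descFactorial (n m + k m) (k m) : ℝ))
      atTop (nhds (Real.exp x)) :=
  stmt_8_general n k i x hn hk hi hki
end

section
/- Existence and uniqueness of the variational fixed point: let g(x) = (n̄+k̄-x)log(n̄+k̄-x) - (n̄-x)log(n̄-x) on [0, n̄] with n̄, k̄ > 0, and let ℓ : [0,∞) → [0,∞) be a convex, continuously differentiable function on (0, c), strictly decreasing on [0, c], zero on [c, ∞) (c > 0), with ℓ'(x) → -∞ as x ↓ 0 and ℓ'(x) → 0 as x ↑ c. Then sup_{x ∈ [0, n̄]} { g(x) - ℓ(x) } is attained at a unique ψ ∈ (0, min(n̄, c)), and ψ satisfies the first-order condition log((n̄-ψ)/(n̄+k̄-ψ)) = ℓ'(ψ). -/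
/-!
`g` is strictly concave, its derivative `log (n̄ - x) - log (n̄ + k̄ - x)` being strictly
decreasing, and `ℓ` is convex, so `g - ℓ` is strictly concave on `[0, n̄]`: an interior critical
point is its unique maximiser. A critical point in `(0, min n̄ c)` exists by the intermediate value
theorem, since `g' - ℓ'` tends to `+∞` at `0⁺` (because `ℓ' → -∞`) and is eventually negative at
`(min n̄ c)⁻`: if `n̄ ≤ c` because `g' → -∞` at `n̄⁻` while `ℓ'` is monotone, and otherwise because
`g'(c) < 0 = ℓ'(c⁻)`.
-/

open Real Set Filter Topology

/-- The function `g` of the statement, with `a = n̄` and `b = n̄ + k̄`. -/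
noncomputable def entropyGap (a b x : ℝ) : ℝ := (b - x) * log (b - x) - (a - x) * log (a - x)

noncomputable def entropyGapDeriv (a b x : ℝ) : ℝ := log (a - x) - log (b - x)

section EntropyGap

variable {a b x : ℝ}

lemma hasDerivAt_sub_mul_log_sub (hx : x < a) :
    HasDerivAt (fun y => (a - y) * log (a - y)) (-(log (a - x) + 1)) x :=
  ((Real.hasDerivAt_mul_log (sub_pos.2 hx).ne').comp x
    ((hasDerivAt_id x).const_sub a)).congr_deriv (by ring)

lemma hasDerivAt_entropyGap (hab : a ≤ b) (hx : x < a) :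
    HasDerivAt (entropyGap a b) (entropyGapDeriv a b x) x :=
  ((hasDerivAt_sub_mul_log_sub (hx.trans_le hab)).sub
    (hasDerivAt_sub_mul_log_sub hx)).congr_deriv (by rw [entropyGapDeriv]; ring)

lemma continuous_entropyGap : Continuous (entropyGap a b) :=
  (continuous_mul_log.comp (continuous_sub_left b)).sub
    (continuous_mul_log.comp (continuous_sub_left a))

lemma continuousAt_entropyGapDeriv (hab : a ≤ b) (hx : x < a) :
    ContinuousAt (entropyGapDeriv a b) x :=
  ((continuousAt_log (sub_pos.2 hx).ne').comp (continuous_sub_left a).continuousAt).sub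
    ((continuousAt_log (sub_pos.2 (hx.trans_le hab)).ne').comp
      (continuous_sub_left b).continuousAt)

lemma continuousOn_entropyGapDeriv (hab : a ≤ b) : ContinuousOn (entropyGapDeriv a b) (Iio a) :=
  fun _ hx => (continuousAt_entropyGapDeriv hab hx).continuousWithinAt

lemma entropyGapDeriv_neg (hab : a < b) (hx : x < a) : entropyGapDeriv a b x < 0 :=
  sub_neg.2 (log_lt_log (sub_pos.2 hx) (by linarith))

lemma strictAntiOn_entropyGapDeriv (hab : a < b) : StrictAntiOn (entropyGapDeriv a b) (Iio a) := by
  intro x hx y hy hxy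
  have hx : 0 < a - x := sub_pos.2 hx
  have hy : 0 < a - y := sub_pos.2 hy
  -- cross-multiplied form of `(a - y) / (b - y) < (a - x) / (b - x)`
  have key : (a - y) * (b - x) < (a - x) * (b - y) := by nlinarith
  have := log_lt_log (mul_pos hy (by linarith)) key
  rw [log_mul hy.ne' (by linarith), log_mul hx.ne' (by linarith)] at this
  simp only [entropyGapDeriv]
  linarith

lemma tendsto_entropyGapDeriv_atBot (hab : a < b) :
    Tendsto (entropyGapDeriv a b) (𝓝[<] a) atBot := by
  have hsub : Tendsto (a - ·) (𝓝[<] a) (𝓝[>] 0) :=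
    tendsto_nhdsWithin_of_tendsto_nhds_of_eventually_within _
      ((continuous_sub_left a).tendsto' a 0 (sub_self a) |>.mono_left nhdsWithin_le_nhds)
      (eventually_nhdsWithin_of_forall fun x hx => mem_Ioi.2 (sub_pos.2 hx))
  have hlog : Tendsto (fun x => log (b - x)) (𝓝[<] a) (𝓝 (log (b - a))) :=
    ((continuousAt_log (by linarith)).comp (continuous_sub_left b).continuousAt).tendsto
      |>.mono_left nhdsWithin_le_nhds
  show Tendsto (fun x => log (a - x) - log (b - x)) _ _
  simpa only [sub_eq_add_neg, Function.comp_def] using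
    (tendsto_log_nhdsGT_zero.comp hsub).atBot_add hlog.neg

lemma strictConcaveOn_entropyGap (hab : a < b) : StrictConcaveOn ℝ (Iic a) (entropyGap a b) := by
  refine StrictAntiOn.strictConcaveOn_of_deriv (convex_Iic a) continuous_entropyGap.continuousOn ?_
  rw [interior_Iic]
  exact (strictAntiOn_entropyGapDeriv hab).congr
    fun x hx => ((hasDerivAt_entropyGap hab.le hx).deriv).symm

end EntropyGap

lemma ConvexOn.monotoneOn_of_hasDerivAt {S : Set ℝ} {f f' : ℝ → ℝ} (hf : ConvexOn ℝ S f)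
    (hd : ∀ x ∈ S, HasDerivAt f (f' x) x) : MonotoneOn f' S :=
  (hf.monotoneOn_deriv fun x hx => (hd x hx).differentiableAt).congr fun x hx => (hd x hx).deriv

lemma ConcaveOn.isMaxOn_of_hasDerivAt_eq_zero {S : Set ℝ} {f : ℝ → ℝ} {x : ℝ}
    (hf : ConcaveOn ℝ S f) (hx : x ∈ interior S) (hfx : HasDerivAt f 0 x) : IsMaxOn f S x := by
  have hneg : derivWithin (-f) (Ioi x) x = 0 := by
    simpa using hfx.neg.hasDerivWithinAt.derivWithin (uniqueDiffWithinAt_Ioi x)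
  simpa using (hf.neg.isMinOn_of_rightDeriv_eq_zero hx hneg).neg

lemma exists_mem_Ioo_eq_zero {f : ℝ → ℝ} {a b : ℝ} (hab : a < b) (hf : ContinuousOn f (Ioo a b))
    (ha : ∀ᶠ x in 𝓝[>] a, 0 < f x) (hb : ∀ᶠ x in 𝓝[<] b, f x < 0) : ∃ x ∈ Ioo a b, f x = 0 := by
  obtain ⟨x, hfx, hx⟩ := (hb.and (Ioo_mem_nhdsLT hab)).exists
  obtain ⟨y, hfy, hy⟩ := (ha.and (Ioo_mem_nhdsGT hab)).exists
  exact isPreconnected_Ioo.intermediate_value hx hy hf ⟨hfx.le, hfy.le⟩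

section CriticalPoint

variable {a b : ℝ} {ℓ' : ℝ → ℝ}

lemma eventually_entropyGapDeriv_sub_pos (ha : 0 < a) (hab : a < b)
    (hbot : Tendsto ℓ' (𝓝[>] 0) atBot) : ∀ᶠ x in 𝓝[>] 0, 0 < entropyGapDeriv a b x - ℓ' x := by
  have hlim := ((continuousAt_entropyGapDeriv hab.le ha).tendsto.mono_left nhdsWithin_le_nhds)
    |>.add_atTop (tendsto_neg_atBot_atTop.comp hbot)
  simpa only [Function.comp_apply, ← sub_eq_add_neg] using hlim.eventually_gt_atTop 0

lemma eventually_entropyGapDeriv_sub_neg {c : ℝ} (ha : 0 < a) (hab : a < b)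
    (hmono : MonotoneOn ℓ' (Ioo 0 c)) (htop : Tendsto ℓ' (𝓝[<] c) (𝓝 0)) :
    ∀ᶠ x in 𝓝[<] min a c, entropyGapDeriv a b x - ℓ' x < 0 := by
  rcases le_or_gt a c with hac | hca
  · -- `ℓ'` is bounded below near `a` by monotonicity, while `entropyGapDeriv` tends to `-∞`
    rw [min_eq_left hac]
    have hbdd : ∀ᶠ x in 𝓝[<] a, -ℓ' x ≤ -ℓ' (a / 2) := by
      filter_upwards [Ioo_mem_nhdsLT (half_lt_self ha)] with x hx
      exact neg_le_neg (hmono ⟨half_pos ha, by linarith⟩ ⟨by linarith [hx.1], hx.2.trans_le hac⟩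
        hx.1.le)
    simpa only [← sub_eq_add_neg] using
      (tendsto_atBot_add_right_of_ge' _ _ (tendsto_entropyGapDeriv_atBot hab) hbdd)
        |>.eventually_lt_atBot 0
  · rw [min_eq_right hca.le]
    have hlim := ((continuousAt_entropyGapDeriv hab.le hca).tendsto.mono_left
      nhdsWithin_le_nhds).sub htop
    rw [sub_zero] at hlim
    exact hlim.eventually (eventually_lt_nhds (entropyGapDeriv_neg hab hca))

end CriticalPoint

theorem stmt_15_general (nbar kbar c : ℝ) (hn : 0 < nbar) (hk : 0 < kbar) (hc : 0 < c)
    (g : ℝ → ℝ)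
    (hg : ∀ x, g x =
      (nbar + kbar - x) * Real.log (nbar + kbar - x) - (nbar - x) * Real.log (nbar - x))
    (ℓ ℓ' : ℝ → ℝ)
    (hconv : ConvexOn ℝ (Ici 0) ℓ)
    (hderiv : ∀ x ∈ Ioo 0 c, HasDerivAt ℓ (ℓ' x) x)
    (hderivcont : ContinuousOn ℓ' (Ioo 0 c))
    (hbot : Tendsto ℓ' (nhdsWithin 0 (Ioi 0)) atBot)
    (htop : Tendsto ℓ' (nhdsWithin c (Iio c)) (nhds 0)) :
    ∃ ψ ∈ Ioo 0 (min nbar c),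
      IsMaxOn (fun x => g x - ℓ x) (Icc 0 nbar) ψ ∧
      (∀ φ ∈ Icc 0 nbar, IsMaxOn (fun x => g x - ℓ x) (Icc 0 nbar) φ → φ = ψ) ∧
      Real.log ((nbar - ψ) / (nbar + kbar - ψ)) = ℓ' ψ := by
  obtain rfl : g = entropyGap nbar (nbar + kbar) := funext hg
  have hab : nbar < nbar + kbar := by linarith
  have hsub : Ioo 0 (min nbar c) ⊆ Iio nbar ∩ Ioo 0 c := fun x hx =>
    ⟨hx.2.trans_le (min_le_left _ _), hx.1, hx.2.trans_le (min_le_right _ _)⟩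
  have hcont : ContinuousOn (fun x => entropyGapDeriv nbar (nbar + kbar) x - ℓ' x)
      (Ioo 0 (min nbar c)) :=
    ((continuousOn_entropyGapDeriv hab.le).mono fun x hx => (hsub hx).1).sub
      (hderivcont.mono fun x hx => (hsub hx).2)
  have hmono : MonotoneOn ℓ' (Ioo 0 c) :=
    (hconv.subset (fun x hx => mem_Ici.2 hx.1.le) (convex_Ioo 0 c)).monotoneOn_of_hasDerivAt hderiv
  obtain ⟨ψ, hψ, hψ0⟩ := exists_mem_Ioo_eq_zero (lt_min hn hc) hcont
    (eventually_entropyGapDeriv_sub_pos hn hab hbot)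
    (eventually_entropyGapDeriv_sub_neg hn hab hmono htop)
  have hψn : ψ < nbar := (hsub hψ).1
  have hconc : StrictConcaveOn ℝ (Icc 0 nbar) (fun x => entropyGap nbar (nbar + kbar) x - ℓ x) :=
    ((strictConcaveOn_entropyGap hab).subset Icc_subset_Iic_self (convex_Icc 0 nbar)).sub_convexOn
      (hconv.subset Icc_subset_Ici_self (convex_Icc 0 nbar))
  have hmax : IsMaxOn (fun x => entropyGap nbar (nbar + kbar) x - ℓ x) (Icc 0 nbar) ψ :=
    hconc.concaveOn.isMaxOn_of_hasDerivAt_eq_zero (by rw [interior_Icc]; exact ⟨hψ.1, hψn⟩)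
      (hψ0 ▸ (hasDerivAt_entropyGap hab.le hψn).sub (hderiv ψ (hsub hψ).2))
  refine ⟨ψ, hψ, hmax, fun φ hφ hφmax => hconc.eq_of_isMaxOn hφmax hmax hφ ⟨hψ.1.le, hψn.le⟩, ?_⟩
  rw [log_div (sub_pos.2 hψn).ne' (sub_pos.2 (hψn.trans hab)).ne']
  exact sub_eq_zero.1 hψ0

/-- Existence and uniqueness of the variational fixed point: with
`g(x) = (n̄+k̄-x)log(n̄+k̄-x) - (n̄-x)log(n̄-x)` on `[0,n̄]` (`n̄, k̄ > 0`) and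
`ℓ` convex, continuously differentiable on `(0,c)`, strictly decreasing on
`[0,c]`, zero on `[c,∞)`, nonnegative, with `ℓ' → -∞` at `0⁺` and `ℓ' → 0` at
`c⁻`, the supremum of `g - ℓ` over `[0,n̄]` is attained at a unique
`ψ ∈ (0, min n̄ c)` satisfying `log((n̄-ψ)/(n̄+k̄-ψ)) = ℓ'(ψ)`. -/
theorem stmt_15 (nbar kbar c : ℝ) (hn : 0 < nbar) (hk : 0 < kbar) (hc : 0 < c)
    (g : ℝ → ℝ)
    (hg : ∀ x, g x =
      (nbar + kbar - x) * Real.log (nbar + kbar - x) - (nbar - x) * Real.log (nbar - x))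
    (ℓ ℓ' : ℝ → ℝ)
    (hconv : ConvexOn ℝ (Ici 0) ℓ)
    (hderiv : ∀ x ∈ Ioo 0 c, HasDerivAt ℓ (ℓ' x) x)
    (hderivcont : ContinuousOn ℓ' (Ioo 0 c))
    (hanti : StrictAntiOn ℓ (Icc 0 c))
    (hzero : ∀ x, c ≤ x → ℓ x = 0)
    (hnonneg : ∀ x, 0 ≤ x → 0 ≤ ℓ x)
    (hbot : Tendsto ℓ' (nhdsWithin 0 (Ioi 0)) atBot)
    (htop : Tendsto ℓ' (nhdsWithin c (Iio c)) (nhds 0)) :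
    ∃ ψ ∈ Ioo 0 (min nbar c),
      IsMaxOn (fun x => g x - ℓ x) (Icc 0 nbar) ψ ∧
      (∀ φ ∈ Icc 0 nbar, IsMaxOn (fun x => g x - ℓ x) (Icc 0 nbar) φ → φ = ψ) ∧
      Real.log ((nbar - ψ) / (nbar + kbar - ψ)) = ℓ' ψ :=
  stmt_15_general nbar kbar c hn hk hc g hg ℓ ℓ' hconv hderiv hderivcont hbot htop
end

section
/- Normalization-constant representation: with κ₁ < κ₂ ≤ ⋯ ≤ κ_f, f₁ = 1, 𝙼 ~ Poisson(κ₁) and 𝙻_i independent geometric with P[𝙻_i ≥ l] = (κ₁/κ_i)^l for i ≥ 2, 𝚂 = Σ_{i≥2} 𝙻_i, the normalization constant c_{m,f} = m! Σ_{0 ≤ l₁+⋯+l_f ≤ m} κ₁^{-l₁}⋯κ_f^{-l_f}/(m-Σl_i)! satisfies c_{m,f} = P[𝙼 + 𝚂 ≤ m] / (P[𝙼 = m] · P[𝚂 = 0]). -/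
/-!
By independence, `P[𝙼 + 𝚂 ≤ m]` is a sum over the simplex `{n : Σ nᵢ ≤ m}` of products of Poisson
and geometric point masses, and each product is `e^{-κ₁} ∏_{i≥2} (1 - κ₁/κᵢ)` times the weight
`w(n) = κ₁^{n₁}/n₁! ∏_{i≥2} (κ₁/κᵢ)^{nᵢ}`. As `P[𝙼 = m] P[𝚂 = 0] = e^{-κ₁} κ₁^m/m! ∏_{i≥2} (1 - κ₁/κᵢ)`,
the ratio is `m!/κ₁^m Σ w(n)`. The substitution `n₁ = m - Σ lᵢ`, `nᵢ = lᵢ` (`i ≥ 2`) is an involution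
of the simplex, and it turns `κ₁^{-m} w(n)` into `∏ κᵢ^{-lᵢ} / (m - Σ lᵢ)!`.
-/

open MeasureTheory ProbabilityTheory Finset Function
open scoped Nat

section Tuples

variable {ι : Type*} [Fintype ι] [DecidableEq ι]

variable (ι) in
def boundedSumTuples (m : ℕ) : Finset (ι → ℕ) :=
  (Fintype.piFinset fun _ : ι => range (m + 1)).filter fun l => ∑ i, l i ≤ m

theorem mem_boundedSumTuples {m : ℕ} {l : ι → ℕ} :
    l ∈ boundedSumTuples ι m ↔ ∑ i, l i ≤ m := by
  simp only [boundedSumTuples, mem_filter, Fintype.mem_piFinset, mem_range, and_iff_right_iff_imp]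
  exact fun h i => Nat.lt_succ_of_le <| (single_le_sum (fun j _ => Nat.zero_le (l j))
    (mem_univ i)).trans h

def fillSlack (i₀ : ι) (m : ℕ) (l : ι → ℕ) : ι → ℕ := update l i₀ (m - ∑ j, l j)

theorem sum_fillSlack {m : ℕ} {l : ι → ℕ} (hl : ∑ i, l i ≤ m) (i₀ : ι) :
    ∑ i, fillSlack i₀ m l i = m - l i₀ := by
  have := add_sum_erase univ l (mem_univ i₀)
  rw [fillSlack, sum_update_of_mem (mem_univ i₀), sdiff_singleton_eq_erase]
  omega

theorem fillSlack_mem_boundedSumTuples {m : ℕ} {l : ι → ℕ} (hl : l ∈ boundedSumTuples ι m)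
    (i₀ : ι) : fillSlack i₀ m l ∈ boundedSumTuples ι m := by
  rw [mem_boundedSumTuples] at hl ⊢
  rw [sum_fillSlack hl]
  exact Nat.sub_le m _

theorem fillSlack_fillSlack {m : ℕ} {l : ι → ℕ} (hl : ∑ i, l i ≤ m) (i₀ : ι) :
    fillSlack i₀ m (fillSlack i₀ m l) = l := by
  have : l i₀ ≤ m := (single_le_sum (fun j _ => Nat.zero_le (l j)) (mem_univ i₀)).trans hl
  rw [fillSlack, sum_fillSlack hl, fillSlack, update_idem, Nat.sub_sub_self this, update_eq_self]

theorem sum_boundedSumTuples_comp_fillSlack {M : Type*} [AddCommMonoid M] (m : ℕ) (i₀ : ι)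
    (F : (ι → ℕ) → M) :
    ∑ l ∈ boundedSumTuples ι m, F (fillSlack i₀ m l) = ∑ n ∈ boundedSumTuples ι m, F n := by
  have hinv : ∀ l ∈ boundedSumTuples ι m, fillSlack i₀ m (fillSlack i₀ m l) = l :=
    fun l hl => fillSlack_fillSlack (mem_boundedSumTuples.1 hl) i₀
  exact sum_nbij' _ _ (fun l hl => fillSlack_mem_boundedSumTuples hl i₀)
    (fun l hl => fillSlack_mem_boundedSumTuples hl i₀) hinv hinv fun _ _ => rfl

end Tuples

namespace ProbabilityTheory.iIndepFun

variable {ι Ω : Type*} [MeasurableSpace Ω] {μ : Measure Ω} {Y : ι → Ω → ℕ}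

theorem measure_eq_eq_prod [Fintype ι] (hY : iIndepFun Y μ) (n : ι → ℕ) :
    μ {ω | ∀ i, Y i ω = n i} = ∏ i, μ {ω | Y i ω = n i} := by
  rw [show {ω | ∀ i, Y i ω = n i} = ⋂ i, Y i ⁻¹' {n i} by ext; simp]
  exact hY.meas_iInter fun i => ⟨{n i}, measurableSet_singleton _, rfl⟩

theorem measure_sum_eq_zero_eq_prod (hY : iIndepFun Y μ) (s : Finset ι) :
    μ {ω | ∑ i ∈ s, Y i ω = 0} = ∏ i ∈ s, μ {ω | Y i ω = 0} := by
  rw [show {ω | ∑ i ∈ s, Y i ω = 0} = ⋂ i ∈ s, Y i ⁻¹' {0} by ext; simp]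
  exact hY.meas_biInter fun i _ => ⟨{0}, measurableSet_singleton _, rfl⟩

theorem measure_sum_le_eq_sum_prod [Fintype ι] [DecidableEq ι] (hY : iIndepFun Y μ)
    (hYm : ∀ i, Measurable (Y i)) (m : ℕ) :
    μ {ω | ∑ i, Y i ω ≤ m} = ∑ n ∈ boundedSumTuples ι m, ∏ i, μ {ω | Y i ω = n i} := by
  have hfiber (n : ι → ℕ) : (fun ω i => Y i ω) ⁻¹' {n} = {ω | ∀ i, Y i ω = n i} := by
    ext ω; simp [funext_iff]
  have hpre : {ω | ∑ i, Y i ω ≤ m} = (fun ω i => Y i ω) ⁻¹' ↑(boundedSumTuples ι m) := by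
    ext ω; simp [mem_boundedSumTuples]
  rw [hpre, ← sum_measure_preimage_singleton]
  · simp only [hfiber, hY.measure_eq_eq_prod]
  · intro n _
    rw [hfiber, Set.ofPred_forall]
    exact .iInter fun i => hYm i (measurableSet_singleton _)

end ProbabilityTheory.iIndepFun

section Weight

variable {ι : Type*} [Fintype ι] [DecidableEq ι] {κ : ι → ℝ} {i₀ : ι}

noncomputable def poissonGeometricWeight (κ : ι → ℝ) (i₀ : ι) (n : ι → ℕ) : ℝ :=
  κ i₀ ^ n i₀ / (n i₀)! * ∏ i ∈ univ.erase i₀, (κ i₀ / κ i) ^ n i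

theorem poissonGeometricWeight_nonneg (hκ : ∀ i, 0 ≤ κ i) (n : ι → ℕ) :
    0 ≤ poissonGeometricWeight κ i₀ n :=
  mul_nonneg (div_nonneg (pow_nonneg (hκ i₀) _) (Nat.cast_nonneg _))
    (prod_nonneg fun i _ => pow_nonneg (div_nonneg (hκ i₀) (hκ i)) _)

theorem poissonGeometricWeight_fillSlack (hκ : κ i₀ ≠ 0) {m : ℕ} {l : ι → ℕ}
    (hl : ∑ i, l i ≤ m) :
    poissonGeometricWeight κ i₀ (fillSlack i₀ m l) =
      κ i₀ ^ m * ((∏ i, (κ i)⁻¹ ^ l i) / (m - ∑ i, l i)!) := by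
  have hrest : ∏ i ∈ univ.erase i₀, (κ i₀ / κ i) ^ fillSlack i₀ m l i =
      κ i₀ ^ (∑ i ∈ univ.erase i₀, l i) * ∏ i ∈ univ.erase i₀, (κ i)⁻¹ ^ l i := by
    rw [← prod_pow_eq_pow_sum, ← prod_mul_distrib]
    refine prod_congr rfl fun i hi => ?_
    rw [fillSlack, update_of_ne (ne_of_mem_erase hi), div_eq_mul_inv, mul_pow]
  have hsplit := add_sum_erase univ l (mem_univ i₀)
  have hpow : κ i₀ ^ (m - ∑ i, l i) * κ i₀ ^ (∑ i ∈ univ.erase i₀, l i) =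
      κ i₀ ^ m * (κ i₀)⁻¹ ^ l i₀ := by
    rw [← pow_add, inv_pow, ← div_eq_mul_inv, eq_div_iff (pow_ne_zero _ hκ), ← pow_add]
    congr 1
    omega
  rw [poissonGeometricWeight, hrest, fillSlack, update_self, ← mul_prod_erase univ _ (mem_univ i₀)]
  linear_combination (∏ i ∈ univ.erase i₀, (κ i)⁻¹ ^ l i) / ((m - ∑ i, l i)! : ℝ) * hpow

theorem sum_poissonGeometricWeight (hκ : κ i₀ ≠ 0) (m : ℕ) :
    ∑ n ∈ boundedSumTuples ι m, poissonGeometricWeight κ i₀ n =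
      κ i₀ ^ m * ∑ l ∈ boundedSumTuples ι m, (∏ i, (κ i)⁻¹ ^ l i) / (m - ∑ i, l i)! := by
  rw [← sum_boundedSumTuples_comp_fillSlack m i₀, mul_sum]
  exact sum_congr rfl fun l hl =>
    poissonGeometricWeight_fillSlack hκ (mem_boundedSumTuples.1 hl)

theorem one_sub_div_pos_of_lt {a b : ℝ} (ha : 0 < a) (hab : a < b) : 0 < 1 - a / b :=
  sub_pos.2 <| (div_lt_one (ha.trans hab)).2 hab

theorem prod_measure_eq_ofReal_poissonGeometricWeight {Ω : Type*} [MeasurableSpace Ω]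
    {μ : Measure Ω} {Y : ι → Ω → ℕ} (hκ₀ : 0 < κ i₀) (hκ : ∀ i, i ≠ i₀ → κ i₀ < κ i)
    (hY₀ : ∀ n : ℕ, μ {ω | Y i₀ ω = n} =
      ENNReal.ofReal (Real.exp (-κ i₀) * κ i₀ ^ n / n !))
    (hY : ∀ i, i ≠ i₀ → ∀ n : ℕ, μ {ω | Y i ω = n} =
      ENNReal.ofReal ((1 - κ i₀ / κ i) * (κ i₀ / κ i) ^ n))
    (n : ι → ℕ) :
    ∏ i, μ {ω | Y i ω = n i} = ENNReal.ofReal (Real.exp (-κ i₀) *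
      (∏ i ∈ univ.erase i₀, (1 - κ i₀ / κ i)) * poissonGeometricWeight κ i₀ n) := by
  have hgeom_nonneg : ∀ i ∈ univ.erase i₀, 0 ≤ (1 - κ i₀ / κ i) * (κ i₀ / κ i) ^ n i := by
    intro i hi
    have hlt := hκ i (ne_of_mem_erase hi)
    exact mul_nonneg (one_sub_div_pos_of_lt hκ₀ hlt).le
      (pow_nonneg (div_nonneg hκ₀.le (hκ₀.trans hlt).le) _)
  rw [← mul_prod_erase univ _ (mem_univ i₀), hY₀,
    prod_congr rfl fun i hi => hY i (ne_of_mem_erase hi) (n i),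
    ← ENNReal.ofReal_prod_of_nonneg hgeom_nonneg, ← ENNReal.ofReal_mul (by positivity),
    poissonGeometricWeight, prod_mul_distrib]
  ring_nf

end Weight

theorem stmt_17_general (m f : ℕ) (hf : 0 < f)
    (κ : Fin f → ℝ) (hκpos : ∀ i, 0 < κ i)
    (hbottleneck : ∀ i, i ≠ ⟨0, hf⟩ → κ ⟨0, hf⟩ < κ i)
    (Ω' : Type*) [MeasurableSpace Ω'] (μ' : Measure Ω')
    (Y : Fin f → Ω' → ℕ) (hYmeas : ∀ i, Measurable (Y i))
    (hindep : iIndepFun Y μ')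
    (hY0 : ∀ n : ℕ, μ' {ω | Y ⟨0, hf⟩ ω = n} =
      ENNReal.ofReal (Real.exp (-κ ⟨0, hf⟩) * (κ ⟨0, hf⟩) ^ n / (Nat.factorial n)))
    (hYi : ∀ i, i ≠ ⟨0, hf⟩ → ∀ n : ℕ, μ' {ω | Y i ω = n} =
      ENNReal.ofReal ((1 - κ ⟨0, hf⟩ / κ i) * (κ ⟨0, hf⟩ / κ i) ^ n)) :
    ENNReal.ofReal ((Nat.factorial m : ℝ) *
        ∑ l ∈ (Fintype.piFinset fun _ : Fin f => Finset.range (m + 1)).filter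
            (fun l => ∑ i, l i ≤ m),
          (∏ i, ((κ i)⁻¹) ^ l i) / (Nat.factorial (m - ∑ i, l i))) =
      μ' {ω | ∑ i, Y i ω ≤ m} /
        (μ' {ω | Y ⟨0, hf⟩ ω = m} *
          μ' {ω | ∑ i ∈ Finset.univ.filter (fun i => i ≠ ⟨0, hf⟩), Y i ω = 0}) := by
  set i₀ : Fin f := ⟨0, hf⟩
  rw [show (Fintype.piFinset fun _ : Fin f => range (m + 1)).filter (fun l => ∑ i, l i ≤ m) =
    boundedSumTuples (Fin f) m from rfl]
  have hκ₀ := hκpos i₀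
  have hr : ∀ i ∈ univ.erase i₀, 0 < 1 - κ i₀ / κ i := fun i hi =>
    one_sub_div_pos_of_lt hκ₀ (hbottleneck i (ne_of_mem_erase hi))
  have hS₀ : μ' {ω | ∑ i ∈ univ.filter (fun i => i ≠ i₀), Y i ω = 0} =
      ENNReal.ofReal (∏ i ∈ univ.erase i₀, (1 - κ i₀ / κ i)) := by
    rw [filter_ne', hindep.measure_sum_eq_zero_eq_prod,
      prod_congr rfl fun i hi => hYi i (ne_of_mem_erase hi) 0,
      ← ENNReal.ofReal_prod_of_nonneg fun i hi => by simpa using (hr i hi).le]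
    simp only [pow_zero, mul_one]
  have hD := prod_pos hr
  rw [hindep.measure_sum_le_eq_sum_prod hYmeas, hY0, hS₀,
    sum_congr rfl fun n _ => prod_measure_eq_ofReal_poissonGeometricWeight hκ₀
      hbottleneck hY0 hYi n,
    ← ENNReal.ofReal_sum_of_nonneg fun n _ => ?_, ← mul_sum, sum_poissonGeometricWeight hκ₀.ne',
    ← ENNReal.ofReal_mul (by positivity), ← ENNReal.ofReal_div_of_pos (by positivity)]
  · congr 1
    field_simp
  · have := poissonGeometricWeight_nonneg (fun i => (hκpos i).le) (i₀ := i₀) n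
    positivity

/-- Normalization-constant representation: with `κ₁ < κ₂ ≤ ⋯ ≤ κ_f` (single
bottleneck), `𝙼 ~ Poisson(κ₁)` and `𝙻ᵢ` independent geometrics with ratios
`κ₁/κᵢ` (`i ≥ 2`), the normalization constant
`c_{m,f} = m! Σ_{0 ≤ Σlᵢ ≤ m} κ₁^{-l₁}⋯κ_f^{-l_f}/(m-Σlᵢ)!`
satisfies `c_{m,f} = P[𝙼 + 𝚂 ≤ m] / (P[𝙼 = m] P[𝚂 = 0])`. -/
theorem stmt_17 (m f : ℕ) (hm : 0 < m) (hf : 0 < f)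
    (κ : Fin f → ℝ) (hκpos : ∀ i, 0 < κ i) (hκmono : Monotone κ)
    (hbottleneck : ∀ i, i ≠ ⟨0, hf⟩ → κ ⟨0, hf⟩ < κ i)
    (Ω' : Type*) [MeasurableSpace Ω'] (μ' : Measure Ω') [IsProbabilityMeasure μ']
    (Y : Fin f → Ω' → ℕ) (hYmeas : ∀ i, Measurable (Y i))
    (hindep : iIndepFun Y μ')
    (hY0 : ∀ n : ℕ, μ' {ω | Y ⟨0, hf⟩ ω = n} =
      ENNReal.ofReal (Real.exp (-κ ⟨0, hf⟩) * (κ ⟨0, hf⟩) ^ n / (Nat.factorial n)))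
    (hYi : ∀ i, i ≠ ⟨0, hf⟩ → ∀ n : ℕ, μ' {ω | Y i ω = n} =
      ENNReal.ofReal ((1 - κ ⟨0, hf⟩ / κ i) * (κ ⟨0, hf⟩ / κ i) ^ n)) :
    ENNReal.ofReal ((Nat.factorial m : ℝ) *
        ∑ l ∈ (Fintype.piFinset fun _ : Fin f => Finset.range (m + 1)).filter
            (fun l => ∑ i, l i ≤ m),
          (∏ i, ((κ i)⁻¹) ^ l i) / (Nat.factorial (m - ∑ i, l i))) =
      μ' {ω | ∑ i, Y i ω ≤ m} /
        (μ' {ω | Y ⟨0, hf⟩ ω = m} *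
          μ' {ω | ∑ i ∈ Finset.univ.filter (fun i => i ≠ ⟨0, hf⟩), Y i ω = 0}) :=
  stmt_17_general m f hf κ hκpos hbottleneck Ω' μ' Y hYmeas hindep hY0 hYi
end

section
/- Two-type fixed-point quadratic: for f̄₁ > 0, f̄₂ > 0, and 0 < ρ < 1, the quadratic ψ² - ψ(1 + f̄₁/(1-ρ) + ρ f̄₂/(1-ρ)) + ρ f̄₂/(1-ρ) = 0 has exactly one root in the open interval (0, min(f̄₂·ρ/(1-ρ), 1)). -/
open Set

/-! Writing `F = f̄₁/(1-ρ)` and `K = ρ f̄₂/(1-ρ)`, the quadratic `p` satisfies `p(0) = K > 0` and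
`p(m) = (1 - m)(K - m) - mF = -mF < 0` at `m = min K 1`, so it has a root in `(0, m)` by the
intermediate value theorem. It cannot have two: a monic quadratic with two roots below `m`
factors as `(x - a)(x - b)` and is positive at `m`. -/

theorem eq_of_quadratic_roots_lt_of_neg {s c m a b : ℝ} (hm : m ^ 2 - m * s + c < 0)
    (ha : a ^ 2 - a * s + c = 0) (hb : b ^ 2 - b * s + c = 0) (ham : a < m) (hbm : b < m) :
    a = b := by
  by_contra hab
  have hsum : a + b = s := by
    have : (a - b) * (a + b - s) = 0 := by linear_combination ha - hb
    linarith [(mul_eq_zero.mp this).resolve_left (sub_ne_zero.mpr hab)]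
  have hfactor : m ^ 2 - m * s + c = (m - a) * (m - b) := by
    subst hsum; linear_combination ha
  nlinarith [mul_pos (sub_pos.mpr ham) (sub_pos.mpr hbm)]

theorem existsUnique_quadratic_root_mem_Ioo {s c m : ℝ} (hc : 0 < c) (hm₀ : 0 < m)
    (hm : m ^ 2 - m * s + c < 0) :
    ∃! x : ℝ, x ∈ Ioo 0 m ∧ x ^ 2 - x * s + c = 0 := by
  have hcont : ContinuousOn (fun x : ℝ => x ^ 2 - x * s + c) (Icc 0 m) := by fun_prop
  obtain ⟨x, hx, hroot⟩ := intermediate_value_Ioo' hm₀.le hcont (by simpa using And.intro hm hc)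
  exact ⟨x, ⟨hx, hroot⟩, fun y ⟨hy, hyroot⟩ =>
    eq_of_quadratic_roots_lt_of_neg hm hyroot hroot hy.2 hx.2⟩

/-- Two-type fixed-point quadratic: for `f̄₁ > 0`, `f̄₂ > 0` and `0 < ρ < 1`,
the quadratic `ψ² - ψ(1 + f̄₁/(1-ρ) + ρ f̄₂/(1-ρ)) + ρ f̄₂/(1-ρ) = 0` has
exactly one root in `(0, min(f̄₂ ρ/(1-ρ), 1))`. -/
theorem stmt_19 (fbar₁ fbar₂ ρ : ℝ) (hf₁ : 0 < fbar₁) (hf₂ : 0 < fbar₂)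
    (hρ : ρ ∈ Ioo (0 : ℝ) 1) :
    ∃! ψ : ℝ, ψ ∈ Ioo 0 (min (fbar₂ * ρ / (1 - ρ)) 1) ∧
      ψ ^ 2 - ψ * (1 + fbar₁ / (1 - ρ) + ρ * fbar₂ / (1 - ρ)) +
        ρ * fbar₂ / (1 - ρ) = 0 := by
  have h1ρ : 0 < 1 - ρ := sub_pos.mpr hρ.2
  set F := fbar₁ / (1 - ρ)
  set K := ρ * fbar₂ / (1 - ρ)
  have hF : 0 < F := div_pos hf₁ h1ρ
  have hK : 0 < K := div_pos (mul_pos hρ.1 hf₂) h1ρ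
  rw [mul_comm fbar₂ ρ]
  set m := min K 1
  have hm : 0 < m := lt_min hK one_pos
  have hmin : (K - m) * (1 - m) = 0 := by
    rcases min_choice K 1 with h | h <;> simp [m, h]
  refine existsUnique_quadratic_root_mem_Ioo hK hm ?_
  nlinarith [mul_pos hm hF]
end
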